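/- For every ε > 0 there exists δ₀ > 0 such that for all δ with 0 < δ < δ₀, the polynomial function f(x,y,z) = x³ − 3xy² + z³ − 3εz − δz(x² + y²) has exactly eight critical points in ℝ³, all of them nondegenerate, with exactly four of Morse index 1 and exactly four of Morse index 2. -/

import Mathlib

open MvPolynomial Matrix

/-- The Hessian matrix of a polynomial in three real variables at a point. -/
noncomputable def hess3 (f : MvPolynomial (Fin 3) ℝ) (p : Fin 3 → ℝ) :
    Matrix (Fin 3) (Fin 3) ℝ :=
  Matrix.of fun i j => eval p (pderiv i (pderiv j f))

/-- A point of ℝ³ is a critical point of a polynomial in three variables if all three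
partial derivatives vanish there. -/
def IsCriticalPt3 (f : MvPolynomial (Fin 3) ℝ) (p : Fin 3 → ℝ) : Prop :=
  ∀ i, eval p (pderiv i f) = 0

/-- The Morse index at a point: the number of negative eigenvalues (with multiplicity)
of the Hessian matrix there (junk value 0 if the Hessian is not symmetric). -/
noncomputable def morseIndex3 (f : MvPolynomial (Fin 3) ℝ) (p : Fin 3 → ℝ) : ℕ :=
  if h : (hess3 f p).IsHermitian then {i : Fin 3 | h.eigenvalues i < 0}.ncard else 0

/-- The polynomial f(x,y,z) = x³ − 3xy² + z³ − 3εz − δz(x² + y²). -/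
noncomputable def fPert (ε δ : ℝ) : MvPolynomial (Fin 3) ℝ :=
  X 0 ^ 3 - C 3 * X 0 * X 1 ^ 2 + X 2 ^ 3 - C (3 * ε) * X 2
    - C δ * X 2 * (X 0 ^ 2 + X 1 ^ 2)

/-! ### Auxiliary lemmas -/

section Aux

lemma fPert_eq (ε δ : ℝ) : fPert ε δ =
    X 0 * X 0 * X 0 - C 3 * X 0 * (X 1 * X 1) + X 2 * X 2 * X 2 - C (3 * ε) * X 2
      - C δ * X 2 * (X 0 * X 0 + X 1 * X 1) := by
  rw [fPert]; ring

lemma grad0 (ε δ : ℝ) (p : Fin 3 → ℝ) :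
    eval p (pderiv 0 (fPert ε δ)) = 3 * p 0 ^ 2 - 3 * p 1 ^ 2 - 2 * δ * p 2 * p 0 := by
  rw [fPert_eq]; simp [pderiv_X]; ring

lemma grad1 (ε δ : ℝ) (p : Fin 3 → ℝ) :
    eval p (pderiv 1 (fPert ε δ)) = -6 * p 0 * p 1 - 2 * δ * p 2 * p 1 := by
  rw [fPert_eq]; simp [pderiv_X]; ring

lemma grad2 (ε δ : ℝ) (p : Fin 3 → ℝ) :
    eval p (pderiv 2 (fPert ε δ)) = 3 * p 2 ^ 2 - 3 * ε - δ * (p 0 ^ 2 + p 1 ^ 2) := by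
  rw [fPert_eq]; simp [pderiv_X]; ring

lemma crit_iff (ε δ : ℝ) (p : Fin 3 → ℝ) :
    IsCriticalPt3 (fPert ε δ) p ↔
      3 * p 0 ^ 2 - 3 * p 1 ^ 2 - 2 * δ * p 2 * p 0 = 0 ∧
      -6 * p 0 * p 1 - 2 * δ * p 2 * p 1 = 0 ∧
      3 * p 2 ^ 2 - 3 * ε - δ * (p 0 ^ 2 + p 1 ^ 2) = 0 := by
  constructor
  · intro h
    exact ⟨by rw [← grad0 ε δ p]; exact h 0, by rw [← grad1 ε δ p]; exact h 1,
      by rw [← grad2 ε δ p]; exact h 2⟩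
  · rintro ⟨h1, h2, h3⟩ i
    have g0 : eval p (pderiv (0 : Fin 3) (fPert ε δ)) = 0 := by rw [grad0]; exact h1
    have g1 : eval p (pderiv (1 : Fin 3) (fPert ε δ)) = 0 := by rw [grad1]; exact h2
    have g2 : eval p (pderiv (2 : Fin 3) (fPert ε δ)) = 0 := by rw [grad2]; exact h3
    fin_cases i
    exacts [g0, g1, g2]

set_option maxHeartbeats 1000000 in
lemma hess_eq (ε δ : ℝ) (p : Fin 3 → ℝ) :
    hess3 (fPert ε δ) p =
      !![6 * p 0 - 2 * δ * p 2, -6 * p 1, -2 * δ * p 0;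
         -6 * p 1, -6 * p 0 - 2 * δ * p 2, -2 * δ * p 1;
         -2 * δ * p 0, -2 * δ * p 1, 6 * p 2] := by
  ext i j
  rw [hess3]
  fin_cases i <;> fin_cases j <;> rw [fPert_eq] <;>
    · simp [pderiv_X, Matrix.of_apply]
      ring

lemma hess_herm (ε δ : ℝ) (p : Fin 3 → ℝ) : (hess3 (fPert ε δ) p).IsHermitian := by
  rw [Matrix.IsHermitian, hess_eq]
  ext i j
  fin_cases i <;> fin_cases j <;> simp [Matrix.conjTranspose_apply]

variable {A : Matrix (Fin 3) (Fin 3) ℝ}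

lemma ev_sum (hA : A.IsHermitian) : ∑ i, hA.eigenvalues i = A.trace := by
  conv_rhs => rw [hA.spectral_theorem, Unitary.conjStarAlgAut_apply]
  rw [Matrix.trace_mul_cycle]
  rw [show (star (hA.eigenvectorUnitary : Matrix (Fin 3) (Fin 3) ℝ)) *
      (hA.eigenvectorUnitary : Matrix (Fin 3) (Fin 3) ℝ) = 1 from
    (Matrix.mem_unitaryGroup_iff').mp hA.eigenvectorUnitary.2]
  simp [Matrix.trace_diagonal, RCLike.ofReal_real_eq_id]

lemma ev_prod (hA : A.IsHermitian) : ∏ i, hA.eigenvalues i = A.det := by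
  rw [hA.det_eq_prod_eigenvalues]
  norm_num [RCLike.ofReal_real_eq_id]

lemma ev_sq_sum (hA : A.IsHermitian) : ∑ i, hA.eigenvalues i ^ 2 = (A * A).trace := by
  set V := (hA.eigenvectorUnitary : Matrix (Fin 3) (Fin 3) ℝ) with hV
  set D : Matrix (Fin 3) (Fin 3) ℝ := diagonal (RCLike.ofReal ∘ hA.eigenvalues) with hD
  have h1 : star V * V = 1 := (Matrix.mem_unitaryGroup_iff').mp hA.eigenvectorUnitary.2
  have key : star V * (V * (D * star V)) = D * star V := by
    rw [← Matrix.mul_assoc, h1, Matrix.one_mul]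
  conv_rhs => rw [hA.spectral_theorem, Unitary.conjStarAlgAut_apply]
  simp only [Matrix.mul_assoc]
  rw [key, ← Matrix.mul_assoc D D, Matrix.trace_mul_cycle', ← Matrix.mul_assoc, h1,
    Matrix.one_mul, hD, Matrix.diagonal_mul_diagonal, Matrix.trace_diagonal]
  simp [sq, RCLike.ofReal_real_eq_id]

lemma ncard_neg_one (lam : Fin 3 → ℝ)
    (hprod : lam 0 * lam 1 * lam 2 < 0)
    (hcond : 0 < lam 0 + lam 1 + lam 2 ∨
      (lam 0 + lam 1 + lam 2) ^ 2 < lam 0 ^ 2 + lam 1 ^ 2 + lam 2 ^ 2) :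
    {i : Fin 3 | lam i < 0}.ncard = 1 := by
  have h0 : lam 0 ≠ 0 := by intro h; rw [h] at hprod; simp at hprod
  have h1 : lam 1 ≠ 0 := by intro h; rw [h] at hprod; simp at hprod
  have h2 : lam 2 ≠ 0 := by intro h; rw [h] at hprod; simp at hprod
  rcases h0.lt_or_gt with h0 | h0 <;> rcases h1.lt_or_gt with h1 | h1 <;>
    rcases h2.lt_or_gt with h2 | h2
  · exfalso
    rcases hcond with h | h
    · linarith
    · nlinarith [mul_pos_of_neg_of_neg h0 h1, mul_pos_of_neg_of_neg h0 h2,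
        mul_pos_of_neg_of_neg h1 h2]
  · exact absurd hprod (by nlinarith [mul_pos (mul_pos_of_neg_of_neg h0 h1) h2])
  · exact absurd hprod (by nlinarith [mul_pos_of_neg_of_neg (mul_neg_of_neg_of_pos h0 h1) h2])
  · have hs : {i : Fin 3 | lam i < 0} = {0} := by
      ext i; fin_cases i <;> simp_all <;> linarith
    rw [hs, Set.ncard_singleton]
  · exact absurd hprod (by nlinarith [mul_pos_of_neg_of_neg (mul_neg_of_pos_of_neg h0 h1) h2])
  · have hs : {i : Fin 3 | lam i < 0} = {1} := by
      ext i; fin_cases i <;> simp_all <;> linarith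
    rw [hs, Set.ncard_singleton]
  · have hs : {i : Fin 3 | lam i < 0} = {2} := by
      ext i; fin_cases i <;> simp_all <;> linarith
    rw [hs, Set.ncard_singleton]
  · exact absurd hprod (by nlinarith [mul_pos (mul_pos h0 h1) h2])

lemma ncard_neg_two (lam : Fin 3 → ℝ)
    (hprod : 0 < lam 0 * lam 1 * lam 2)
    (hcond : lam 0 + lam 1 + lam 2 < 0 ∨
      (lam 0 + lam 1 + lam 2) ^ 2 < lam 0 ^ 2 + lam 1 ^ 2 + lam 2 ^ 2) :
    {i : Fin 3 | lam i < 0}.ncard = 2 := by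
  have h0 : lam 0 ≠ 0 := by intro h; rw [h] at hprod; simp at hprod
  have h1 : lam 1 ≠ 0 := by intro h; rw [h] at hprod; simp at hprod
  have h2 : lam 2 ≠ 0 := by intro h; rw [h] at hprod; simp at hprod
  rcases h0.lt_or_gt with h0 | h0 <;> rcases h1.lt_or_gt with h1 | h1 <;>
    rcases h2.lt_or_gt with h2 | h2
  · exact absurd hprod (by nlinarith [mul_neg_of_pos_of_neg (mul_pos_of_neg_of_neg h0 h1) h2])
  · have hs : {i : Fin 3 | lam i < 0} = {0, 1} := by
      ext i; fin_cases i <;> simp_all <;> linarith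
    rw [hs, Set.ncard_pair (by decide)]
  · have hs : {i : Fin 3 | lam i < 0} = {0, 2} := by
      ext i; fin_cases i <;> simp_all <;> linarith
    rw [hs, Set.ncard_pair (by decide)]
  · exact absurd hprod (by nlinarith [mul_neg_of_neg_of_pos (mul_neg_of_neg_of_pos h0 h1) h2])
  · have hs : {i : Fin 3 | lam i < 0} = {1, 2} := by
      ext i; fin_cases i <;> simp_all <;> linarith
    rw [hs, Set.ncard_pair (by decide)]
  · exact absurd hprod (by nlinarith [mul_neg_of_neg_of_pos (mul_neg_of_pos_of_neg h0 h1) h2])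
  · exact absurd hprod (by nlinarith [mul_neg_of_pos_of_neg (mul_pos h0 h1) h2])
  · exfalso
    rcases hcond with h | h
    · linarith
    · nlinarith [mul_pos h0 h1, mul_pos h0 h2, mul_pos h1 h2]

lemma morseIndex_eq_one (f : MvPolynomial (Fin 3) ℝ) (p : Fin 3 → ℝ)
    (hherm : (hess3 f p).IsHermitian)
    (hdet : (hess3 f p).det < 0)
    (hcond : 0 < (hess3 f p).trace ∨
      (hess3 f p).trace ^ 2 < ((hess3 f p) * (hess3 f p)).trace) :
    morseIndex3 f p = 1 := by
  rw [morseIndex3, dif_pos hherm]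
  apply ncard_neg_one
  · rw [show hherm.eigenvalues 0 * hherm.eigenvalues 1 * hherm.eigenvalues 2 =
      ∏ i, hherm.eigenvalues i from (Fin.prod_univ_three _).symm, ev_prod hherm]
    exact hdet
  · rw [show hherm.eigenvalues 0 + hherm.eigenvalues 1 + hherm.eigenvalues 2 =
      ∑ i, hherm.eigenvalues i from (Fin.sum_univ_three _).symm, ev_sum hherm,
      show hherm.eigenvalues 0 ^ 2 + hherm.eigenvalues 1 ^ 2 + hherm.eigenvalues 2 ^ 2 =
      ∑ i, hherm.eigenvalues i ^ 2 from
        (Fin.sum_univ_three (fun i => hherm.eigenvalues i ^ 2)).symm, ev_sq_sum hherm]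
    exact hcond

lemma morseIndex_eq_two (f : MvPolynomial (Fin 3) ℝ) (p : Fin 3 → ℝ)
    (hherm : (hess3 f p).IsHermitian)
    (hdet : 0 < (hess3 f p).det)
    (hcond : (hess3 f p).trace < 0 ∨
      (hess3 f p).trace ^ 2 < ((hess3 f p) * (hess3 f p)).trace) :
    morseIndex3 f p = 2 := by
  rw [morseIndex3, dif_pos hherm]
  apply ncard_neg_two
  · rw [show hherm.eigenvalues 0 * hherm.eigenvalues 1 * hherm.eigenvalues 2 =
      ∏ i, hherm.eigenvalues i from (Fin.prod_univ_three _).symm, ev_prod hherm]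
    exact hdet
  · rw [show hherm.eigenvalues 0 + hherm.eigenvalues 1 + hherm.eigenvalues 2 =
      ∑ i, hherm.eigenvalues i from (Fin.sum_univ_three _).symm, ev_sum hherm,
      show hherm.eigenvalues 0 ^ 2 + hherm.eigenvalues 1 ^ 2 + hherm.eigenvalues 2 ^ 2 =
      ∑ i, hherm.eigenvalues i ^ 2 from
        (Fin.sum_univ_three (fun i => hherm.eigenvalues i ^ 2)).symm, ev_sq_sum hherm]
    exact hcond

lemma vne0 {a b c a' b' c' : ℝ} (h : a ≠ a') : ![a, b, c] ≠ ![a', b', c'] :=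
  fun he => h (by simpa using congrFun he 0)

lemma vne1 {a b c a' b' c' : ℝ} (h : b ≠ b') : ![a, b, c] ≠ ![a', b', c'] :=
  fun he => h (by simpa using congrFun he 1)

lemma vne2 {a b c a' b' c' : ℝ} (h : c ≠ c') : ![a, b, c] ≠ ![a', b', c'] :=
  fun he => h (by simpa using congrFun he 2)

end Aux

set_option maxHeartbeats 4000000 in
theorem fPert_minus_eight_critical_points (ε : ℝ) (hε : 0 < ε) :
    ∃ δ₀ : ℝ, 0 < δ₀ ∧ ∀ δ : ℝ, 0 < δ → δ < δ₀ →
      {p : Fin 3 → ℝ | IsCriticalPt3 (fPert ε δ) p}.ncard = 8 ∧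
      (∀ p : Fin 3 → ℝ, IsCriticalPt3 (fPert ε δ) p → (hess3 (fPert ε δ) p).det ≠ 0) ∧
      {p : Fin 3 → ℝ | IsCriticalPt3 (fPert ε δ) p ∧
        morseIndex3 (fPert ε δ) p = 1}.ncard = 4 ∧
      {p : Fin 3 → ℝ | IsCriticalPt3 (fPert ε δ) p ∧
        morseIndex3 (fPert ε δ) p = 2}.ncard = 4 := by
  refine ⟨1, one_pos, fun δ hδ0 hδ1 => ?_⟩
  have hδ3 : δ ^ 3 < 1 := pow_lt_one₀ hδ0.le hδ1 (by norm_num)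
  have hK : 0 < 3 - 4/9*δ^3 := by linarith only [hδ3]
  set u := Real.sqrt ε with hu_def
  have hu0 : 0 < u := Real.sqrt_pos.mpr hε
  have hu : u^2 = ε := Real.sq_sqrt hε.le
  set w := Real.sqrt (3*ε/(3 - 4/9*δ^3)) with hw_def
  have hw0 : 0 < w := Real.sqrt_pos.mpr (by positivity)
  have hw2 : w^2 = 3*ε/(3 - 4/9*δ^3) := Real.sq_sqrt (by positivity)
  have hwK : w^2*(3 - 4/9*δ^3) = 3*ε := by
    rw [hw2, div_mul_cancel₀ _ (ne_of_gt hK)]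
  set s := Real.sqrt 3 with hs_def
  have hs0 : 0 < s := Real.sqrt_pos.mpr (by norm_num)
  have hs : s^2 = 3 := Real.sq_sqrt (by norm_num)
  set b := δ*w*s/3 with hb_def
  have hb0 : 0 < b := by rw [hb_def]; positivity
  have hdw : 0 < δ*w := mul_pos hδ0 hw0
  have hB72 : (0:ℝ) < 72 - 32*δ^3/3 := by linarith only [hδ3]
  have hB216 : (0:ℝ) < 216 - 32*δ^3 := by linarith only [hδ3]
  -- the critical set
  have hset : {p : Fin 3 → ℝ | IsCriticalPt3 (fPert ε δ) p} =
      ({![0, 0, u], ![0, 0, -u], ![2*δ*w/3, 0, w], ![-(2*δ*w)/3, 0, -w], ![-(δ*w)/3, b, w], ![-(δ*w)/3, -b, w], ![δ*w/3, b, -w], ![δ*w/3, -b, -w]} : Set (Fin 3 → ℝ)) := by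
    ext p
    rw [Set.mem_setOf_eq, crit_iff]
    constructor
    · rintro ⟨e1, e2, e3⟩
      simp only [Set.mem_insert_iff, Set.mem_singleton_iff]
      have hy2 : p 1 * (3*p 0 + δ*p 2) = 0 := by linear_combination (-1/2)*e2
      rcases mul_eq_zero.mp hy2 with hy | hxz
      · have hx2 : p 0 * (3*p 0 - 2*δ*p 2) = 0 := by linear_combination e1 + 3*p 1*hy
        rcases mul_eq_zero.mp hx2 with hx | hx2'
        · have hz2 : (p 2 - u)*(p 2 + u) = 0 := by
            linear_combination (1/3)*e3 - hu + (δ/3)*p 0*hx + (δ/3)*p 1*hy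
          rcases mul_eq_zero.mp hz2 with hz | hz
          · have hzu : p 2 = u := by linarith only [hz]
            have hp : p = ![0, 0, u] := by
              funext i; fin_cases i
              · simpa using hx
              · simpa using hy
              · simpa using hzu
            tauto
          · have hzu : p 2 = -u := by linarith only [hz]
            have hp : p = ![0, 0, -u] := by
              funext i; fin_cases i
              · simpa using hx
              · simpa using hy
              · simpa using hzu
            tauto
        · have hx : p 0 = 2*δ*p 2/3 := by linarith only [hx2']
          have hz2 : (3 - 4/9*δ^3)*((p 2 - w)*(p 2 + w)) = 0 := by
            linear_combination e3 - hwK + δ*(p 0 + 2*δ*p 2/3)*hx + δ*p 1*hy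
          have hz3 : (p 2 - w)*(p 2 + w) = 0 :=
            (mul_eq_zero.mp hz2).resolve_left (ne_of_gt hK)
          rcases mul_eq_zero.mp hz3 with hz | hz
          · have hzw : p 2 = w := by linarith only [hz]
            rw [hzw] at hx
            have hp : p = ![2*δ*w/3, 0, w] := by
              funext i; fin_cases i
              · simpa using hx
              · simpa using hy
              · simpa using hzw
            tauto
          · have hzw : p 2 = -w := by linarith only [hz]
            rw [hzw] at hx
            have hx' : p 0 = -(2*δ*w)/3 := by linear_combination hx
            have hp : p = ![-(2*δ*w)/3, 0, -w] := by
              funext i; fin_cases i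
              · simpa using hx'
              · simpa using hy
              · simpa using hzw
            tauto
      · have hx : p 0 = -(δ*p 2)/3 := by linarith only [hxz]
        have hyy : δ^2*p 2^2 - 3*p 1^2 = 0 := by
          linear_combination e1 - (p 0 - δ*p 2)*hxz
        have hz2 : (3 - 4/9*δ^3)*((p 2 - w)*(p 2 + w)) = 0 := by
          linear_combination e3 - hwK + δ*(p 0 - δ*p 2/3)*hx - (δ/3)*hyy
        have hz3 : (p 2 - w)*(p 2 + w) = 0 :=
          (mul_eq_zero.mp hz2).resolve_left (ne_of_gt hK)
        rcases mul_eq_zero.mp hz3 with hz | hz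
        · have hzw : p 2 = w := by linarith only [hz]
          rw [hzw] at hx hyy
          have hx' : p 0 = -(δ*w)/3 := by linear_combination hx
          have hb2 : (p 1 - b)*(p 1 + b) = 0 := by
            linear_combination (-1/3)*hyy - (δ^2*w^2/9)*hs
          rcases mul_eq_zero.mp hb2 with hyb | hyb
          · have hyb' : p 1 = b := by linarith only [hyb]
            have hp : p = ![-(δ*w)/3, b, w] := by
              funext i; fin_cases i
              · simpa using hx'
              · simpa using hyb'
              · simpa using hzw
            tauto
          · have hyb' : p 1 = -b := by linarith only [hyb]
            have hp : p = ![-(δ*w)/3, -b, w] := by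
              funext i; fin_cases i
              · simpa using hx'
              · simpa using hyb'
              · simpa using hzw
            tauto
        · have hzw : p 2 = -w := by linarith only [hz]
          rw [hzw] at hx hyy
          have hx' : p 0 = δ*w/3 := by linear_combination hx
          have hb2 : (p 1 - b)*(p 1 + b) = 0 := by
            linear_combination (-1/3)*hyy - (δ^2*w^2/9)*hs
          rcases mul_eq_zero.mp hb2 with hyb | hyb
          · have hyb' : p 1 = b := by linarith only [hyb]
            have hp : p = ![δ*w/3, b, -w] := by
              funext i; fin_cases i
              · simpa using hx'
              · simpa using hyb'
              · simpa using hzw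
            tauto
          · have hyb' : p 1 = -b := by linarith only [hyb]
            have hp : p = ![δ*w/3, -b, -w] := by
              funext i; fin_cases i
              · simpa using hx'
              · simpa using hyb'
              · simpa using hzw
            tauto
    · intro h
      simp only [Set.mem_insert_iff, Set.mem_singleton_iff] at h
      rcases h with rfl | rfl | rfl | rfl | rfl | rfl | rfl | rfl
      · refine ⟨?_, ?_, ?_⟩ <;>
          simp only [Matrix.cons_val_zero, Matrix.cons_val_one, Matrix.head_cons,
            Matrix.cons_val_two, Matrix.tail_cons]
        · ring
        · ring
        · linear_combination 3*hu
      · refine ⟨?_, ?_, ?_⟩ <;>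
          simp only [Matrix.cons_val_zero, Matrix.cons_val_one, Matrix.head_cons,
            Matrix.cons_val_two, Matrix.tail_cons]
        · ring
        · ring
        · linear_combination 3*hu
      · refine ⟨?_, ?_, ?_⟩ <;>
          simp only [Matrix.cons_val_zero, Matrix.cons_val_one, Matrix.head_cons,
            Matrix.cons_val_two, Matrix.tail_cons]
        · ring
        · ring
        · linear_combination hwK
      · refine ⟨?_, ?_, ?_⟩ <;>
          simp only [Matrix.cons_val_zero, Matrix.cons_val_one, Matrix.head_cons,
            Matrix.cons_val_two, Matrix.tail_cons]
        · ring
        · ring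
        · linear_combination hwK
      · refine ⟨?_, ?_, ?_⟩ <;>
          simp only [Matrix.cons_val_zero, Matrix.cons_val_one, Matrix.head_cons,
            Matrix.cons_val_two, Matrix.tail_cons]
        · linear_combination -(δ^2*w^2/3)*hs
        · ring
        · linear_combination hwK - (δ^3*w^2/9)*hs
      · refine ⟨?_, ?_, ?_⟩ <;>
          simp only [Matrix.cons_val_zero, Matrix.cons_val_one, Matrix.head_cons,
            Matrix.cons_val_two, Matrix.tail_cons]
        · linear_combination -(δ^2*w^2/3)*hs
        · ring
        · linear_combination hwK - (δ^3*w^2/9)*hs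
      · refine ⟨?_, ?_, ?_⟩ <;>
          simp only [Matrix.cons_val_zero, Matrix.cons_val_one, Matrix.head_cons,
            Matrix.cons_val_two, Matrix.tail_cons]
        · linear_combination -(δ^2*w^2/3)*hs
        · ring
        · linear_combination hwK - (δ^3*w^2/9)*hs
      · refine ⟨?_, ?_, ?_⟩ <;>
          simp only [Matrix.cons_val_zero, Matrix.cons_val_one, Matrix.head_cons,
            Matrix.cons_val_two, Matrix.tail_cons]
        · linear_combination -(δ^2*w^2/3)*hs
        · ring
        · linear_combination hwK - (δ^3*w^2/9)*hs

  -- pairwise distinctness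
  have hne12 : (![0, 0, u] : Fin 3 → ℝ) ≠ ![0, 0, -u] := vne2 (ne_of_gt (by linarith only [hu0, hw0, hdw, hb0]))
  have hne13 : (![0, 0, u] : Fin 3 → ℝ) ≠ ![2*δ*w/3, 0, w] := vne0 (ne_of_lt (by linarith only [hu0, hw0, hdw, hb0]))
  have hne14 : (![0, 0, u] : Fin 3 → ℝ) ≠ ![-(2*δ*w)/3, 0, -w] := vne2 (ne_of_gt (by linarith only [hu0, hw0, hdw, hb0]))
  have hne15 : (![0, 0, u] : Fin 3 → ℝ) ≠ ![-(δ*w)/3, b, w] := vne0 (ne_of_gt (by linarith only [hu0, hw0, hdw, hb0]))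
  have hne16 : (![0, 0, u] : Fin 3 → ℝ) ≠ ![-(δ*w)/3, -b, w] := vne0 (ne_of_gt (by linarith only [hu0, hw0, hdw, hb0]))
  have hne17 : (![0, 0, u] : Fin 3 → ℝ) ≠ ![δ*w/3, b, -w] := vne2 (ne_of_gt (by linarith only [hu0, hw0, hdw, hb0]))
  have hne18 : (![0, 0, u] : Fin 3 → ℝ) ≠ ![δ*w/3, -b, -w] := vne2 (ne_of_gt (by linarith only [hu0, hw0, hdw, hb0]))
  have hne23 : (![0, 0, -u] : Fin 3 → ℝ) ≠ ![2*δ*w/3, 0, w] := vne2 (ne_of_lt (by linarith only [hu0, hw0, hdw, hb0]))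
  have hne24 : (![0, 0, -u] : Fin 3 → ℝ) ≠ ![-(2*δ*w)/3, 0, -w] := vne0 (ne_of_gt (by linarith only [hu0, hw0, hdw, hb0]))
  have hne25 : (![0, 0, -u] : Fin 3 → ℝ) ≠ ![-(δ*w)/3, b, w] := vne2 (ne_of_lt (by linarith only [hu0, hw0, hdw, hb0]))
  have hne26 : (![0, 0, -u] : Fin 3 → ℝ) ≠ ![-(δ*w)/3, -b, w] := vne2 (ne_of_lt (by linarith only [hu0, hw0, hdw, hb0]))
  have hne27 : (![0, 0, -u] : Fin 3 → ℝ) ≠ ![δ*w/3, b, -w] := vne0 (ne_of_lt (by linarith only [hu0, hw0, hdw, hb0]))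
  have hne28 : (![0, 0, -u] : Fin 3 → ℝ) ≠ ![δ*w/3, -b, -w] := vne0 (ne_of_lt (by linarith only [hu0, hw0, hdw, hb0]))
  have hne34 : (![2*δ*w/3, 0, w] : Fin 3 → ℝ) ≠ ![-(2*δ*w)/3, 0, -w] := vne2 (ne_of_gt (by linarith only [hu0, hw0, hdw, hb0]))
  have hne35 : (![2*δ*w/3, 0, w] : Fin 3 → ℝ) ≠ ![-(δ*w)/3, b, w] := vne0 (ne_of_gt (by linarith only [hu0, hw0, hdw, hb0]))
  have hne36 : (![2*δ*w/3, 0, w] : Fin 3 → ℝ) ≠ ![-(δ*w)/3, -b, w] := vne0 (ne_of_gt (by linarith only [hu0, hw0, hdw, hb0]))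
  have hne37 : (![2*δ*w/3, 0, w] : Fin 3 → ℝ) ≠ ![δ*w/3, b, -w] := vne2 (ne_of_gt (by linarith only [hu0, hw0, hdw, hb0]))
  have hne38 : (![2*δ*w/3, 0, w] : Fin 3 → ℝ) ≠ ![δ*w/3, -b, -w] := vne2 (ne_of_gt (by linarith only [hu0, hw0, hdw, hb0]))
  have hne45 : (![-(2*δ*w)/3, 0, -w] : Fin 3 → ℝ) ≠ ![-(δ*w)/3, b, w] := vne2 (ne_of_lt (by linarith only [hu0, hw0, hdw, hb0]))
  have hne46 : (![-(2*δ*w)/3, 0, -w] : Fin 3 → ℝ) ≠ ![-(δ*w)/3, -b, w] := vne2 (ne_of_lt (by linarith only [hu0, hw0, hdw, hb0]))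
  have hne47 : (![-(2*δ*w)/3, 0, -w] : Fin 3 → ℝ) ≠ ![δ*w/3, b, -w] := vne0 (ne_of_lt (by linarith only [hu0, hw0, hdw, hb0]))
  have hne48 : (![-(2*δ*w)/3, 0, -w] : Fin 3 → ℝ) ≠ ![δ*w/3, -b, -w] := vne0 (ne_of_lt (by linarith only [hu0, hw0, hdw, hb0]))
  have hne56 : (![-(δ*w)/3, b, w] : Fin 3 → ℝ) ≠ ![-(δ*w)/3, -b, w] := vne1 (ne_of_gt (by linarith only [hu0, hw0, hdw, hb0]))
  have hne57 : (![-(δ*w)/3, b, w] : Fin 3 → ℝ) ≠ ![δ*w/3, b, -w] := vne2 (ne_of_gt (by linarith only [hu0, hw0, hdw, hb0]))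
  have hne58 : (![-(δ*w)/3, b, w] : Fin 3 → ℝ) ≠ ![δ*w/3, -b, -w] := vne2 (ne_of_gt (by linarith only [hu0, hw0, hdw, hb0]))
  have hne67 : (![-(δ*w)/3, -b, w] : Fin 3 → ℝ) ≠ ![δ*w/3, b, -w] := vne2 (ne_of_gt (by linarith only [hu0, hw0, hdw, hb0]))
  have hne68 : (![-(δ*w)/3, -b, w] : Fin 3 → ℝ) ≠ ![δ*w/3, -b, -w] := vne2 (ne_of_gt (by linarith only [hu0, hw0, hdw, hb0]))
  have hne78 : (![δ*w/3, b, -w] : Fin 3 → ℝ) ≠ ![δ*w/3, -b, -w] := vne1 (ne_of_gt (by linarith only [hu0, hw0, hdw, hb0]))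
-- hessian data
  have hdet1 : (hess3 (fPert ε δ) ![0, 0, u]).det = 24*δ^2*u^3 := by
    rw [hess_eq]
    simp only [Matrix.det_fin_three, Matrix.cons_val_zero, Matrix.cons_val_one,
      Matrix.head_cons, Matrix.cons_val_two, Matrix.tail_cons, Matrix.cons_val',
      Matrix.empty_val', Matrix.cons_val_fin_one, Matrix.head_fin_const, Matrix.of_apply]
    ring
  have htr1 : (hess3 (fPert ε δ) ![0, 0, u]).trace = 6*u - 4*δ*u := by
    rw [hess_eq]
    simp only [Matrix.trace_fin_three, Matrix.cons_val_zero, Matrix.cons_val_one,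
      Matrix.head_cons, Matrix.cons_val_two, Matrix.tail_cons, Matrix.cons_val',
      Matrix.empty_val', Matrix.cons_val_fin_one, Matrix.head_fin_const, Matrix.of_apply]
    ring
  have hdet2 : (hess3 (fPert ε δ) ![0, 0, -u]).det = -(24*δ^2*u^3) := by
    rw [hess_eq]
    simp only [Matrix.det_fin_three, Matrix.cons_val_zero, Matrix.cons_val_one,
      Matrix.head_cons, Matrix.cons_val_two, Matrix.tail_cons, Matrix.cons_val',
      Matrix.empty_val', Matrix.cons_val_fin_one, Matrix.head_fin_const, Matrix.of_apply]
    ring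
  have htr2 : (hess3 (fPert ε δ) ![0, 0, -u]).trace = -(6*u) + 4*δ*u := by
    rw [hess_eq]
    simp only [Matrix.trace_fin_three, Matrix.cons_val_zero, Matrix.cons_val_one,
      Matrix.head_cons, Matrix.cons_val_two, Matrix.tail_cons, Matrix.cons_val',
      Matrix.empty_val', Matrix.cons_val_fin_one, Matrix.head_fin_const, Matrix.of_apply]
    ring
  have hdet3 : (hess3 (fPert ε δ) ![2*δ*w/3, 0, w]).det = -(72*δ^2*w^3) + 32*δ^5*w^3/3 := by
    rw [hess_eq]
    simp only [Matrix.det_fin_three, Matrix.cons_val_zero, Matrix.cons_val_one,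
      Matrix.head_cons, Matrix.cons_val_two, Matrix.tail_cons, Matrix.cons_val',
      Matrix.empty_val', Matrix.cons_val_fin_one, Matrix.head_fin_const, Matrix.of_apply]
    ring
  have htr3 : (hess3 (fPert ε δ) ![2*δ*w/3, 0, w]).trace = 6*w - 4*δ*w := by
    rw [hess_eq]
    simp only [Matrix.trace_fin_three, Matrix.cons_val_zero, Matrix.cons_val_one,
      Matrix.head_cons, Matrix.cons_val_two, Matrix.tail_cons, Matrix.cons_val',
      Matrix.empty_val', Matrix.cons_val_fin_one, Matrix.head_fin_const, Matrix.of_apply]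
    ring
  have hdet4 : (hess3 (fPert ε δ) ![-(2*δ*w)/3, 0, -w]).det = 72*δ^2*w^3 - 32*δ^5*w^3/3 := by
    rw [hess_eq]
    simp only [Matrix.det_fin_three, Matrix.cons_val_zero, Matrix.cons_val_one,
      Matrix.head_cons, Matrix.cons_val_two, Matrix.tail_cons, Matrix.cons_val',
      Matrix.empty_val', Matrix.cons_val_fin_one, Matrix.head_fin_const, Matrix.of_apply]
    ring
  have htr4 : (hess3 (fPert ε δ) ![-(2*δ*w)/3, 0, -w]).trace = -(6*w) + 4*δ*w := by
    rw [hess_eq]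
    simp only [Matrix.trace_fin_three, Matrix.cons_val_zero, Matrix.cons_val_one,
      Matrix.head_cons, Matrix.cons_val_two, Matrix.tail_cons, Matrix.cons_val',
      Matrix.empty_val', Matrix.cons_val_fin_one, Matrix.head_fin_const, Matrix.of_apply]
    ring
  have hdet5 : (hess3 (fPert ε δ) ![-(δ*w)/3, b, w]).det = 32*δ^3*b^2*w - 216*b^2*w := by
    rw [hess_eq]
    simp only [Matrix.det_fin_three, Matrix.cons_val_zero, Matrix.cons_val_one,
      Matrix.head_cons, Matrix.cons_val_two, Matrix.tail_cons, Matrix.cons_val',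
      Matrix.empty_val', Matrix.cons_val_fin_one, Matrix.head_fin_const, Matrix.of_apply]
    ring
  have htr5 : (hess3 (fPert ε δ) ![-(δ*w)/3, b, w]).trace = 6*w - 4*δ*w := by
    rw [hess_eq]
    simp only [Matrix.trace_fin_three, Matrix.cons_val_zero, Matrix.cons_val_one,
      Matrix.head_cons, Matrix.cons_val_two, Matrix.tail_cons, Matrix.cons_val',
      Matrix.empty_val', Matrix.cons_val_fin_one, Matrix.head_fin_const, Matrix.of_apply]
    ring
  have hdet6 : (hess3 (fPert ε δ) ![-(δ*w)/3, -b, w]).det = 32*δ^3*b^2*w - 216*b^2*w := by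
    rw [hess_eq]
    simp only [Matrix.det_fin_three, Matrix.cons_val_zero, Matrix.cons_val_one,
      Matrix.head_cons, Matrix.cons_val_two, Matrix.tail_cons, Matrix.cons_val',
      Matrix.empty_val', Matrix.cons_val_fin_one, Matrix.head_fin_const, Matrix.of_apply]
    ring
  have htr6 : (hess3 (fPert ε δ) ![-(δ*w)/3, -b, w]).trace = 6*w - 4*δ*w := by
    rw [hess_eq]
    simp only [Matrix.trace_fin_three, Matrix.cons_val_zero, Matrix.cons_val_one,
      Matrix.head_cons, Matrix.cons_val_two, Matrix.tail_cons, Matrix.cons_val',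
      Matrix.empty_val', Matrix.cons_val_fin_one, Matrix.head_fin_const, Matrix.of_apply]
    ring
  have hdet7 : (hess3 (fPert ε δ) ![δ*w/3, b, -w]).det = -(32*δ^3*b^2*w) + 216*b^2*w := by
    rw [hess_eq]
    simp only [Matrix.det_fin_three, Matrix.cons_val_zero, Matrix.cons_val_one,
      Matrix.head_cons, Matrix.cons_val_two, Matrix.tail_cons, Matrix.cons_val',
      Matrix.empty_val', Matrix.cons_val_fin_one, Matrix.head_fin_const, Matrix.of_apply]
    ring
  have htr7 : (hess3 (fPert ε δ) ![δ*w/3, b, -w]).trace = -(6*w) + 4*δ*w := by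
    rw [hess_eq]
    simp only [Matrix.trace_fin_three, Matrix.cons_val_zero, Matrix.cons_val_one,
      Matrix.head_cons, Matrix.cons_val_two, Matrix.tail_cons, Matrix.cons_val',
      Matrix.empty_val', Matrix.cons_val_fin_one, Matrix.head_fin_const, Matrix.of_apply]
    ring
  have hdet8 : (hess3 (fPert ε δ) ![δ*w/3, -b, -w]).det = -(32*δ^3*b^2*w) + 216*b^2*w := by
    rw [hess_eq]
    simp only [Matrix.det_fin_three, Matrix.cons_val_zero, Matrix.cons_val_one,
      Matrix.head_cons, Matrix.cons_val_two, Matrix.tail_cons, Matrix.cons_val',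
      Matrix.empty_val', Matrix.cons_val_fin_one, Matrix.head_fin_const, Matrix.of_apply]
    ring
  have htr8 : (hess3 (fPert ε δ) ![δ*w/3, -b, -w]).trace = -(6*w) + 4*δ*w := by
    rw [hess_eq]
    simp only [Matrix.trace_fin_three, Matrix.cons_val_zero, Matrix.cons_val_one,
      Matrix.head_cons, Matrix.cons_val_two, Matrix.tail_cons, Matrix.cons_val',
      Matrix.empty_val', Matrix.cons_val_fin_one, Matrix.head_fin_const, Matrix.of_apply]
    ring

  have htq1 : ((hess3 (fPert ε δ) ![0, 0, u]) * (hess3 (fPert ε δ) ![0, 0, u])).trace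
      = 8*δ^2*u^2 + 36*u^2 := by
    rw [hess_eq]
    simp only [Matrix.trace_fin_three, Matrix.mul_apply, Fin.sum_univ_three,
      Matrix.cons_val_zero, Matrix.cons_val_one, Matrix.head_cons, Matrix.cons_val_two,
      Matrix.tail_cons, Matrix.cons_val', Matrix.empty_val', Matrix.cons_val_fin_one,
      Matrix.head_fin_const, Matrix.of_apply]
    ring
  have htq2 : ((hess3 (fPert ε δ) ![0, 0, -u]) * (hess3 (fPert ε δ) ![0, 0, -u])).trace
      = 8*δ^2*u^2 + 36*u^2 := by
    rw [hess_eq]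
    simp only [Matrix.trace_fin_three, Matrix.mul_apply, Fin.sum_univ_three,
      Matrix.cons_val_zero, Matrix.cons_val_one, Matrix.head_cons, Matrix.cons_val_two,
      Matrix.tail_cons, Matrix.cons_val', Matrix.empty_val', Matrix.cons_val_fin_one,
      Matrix.head_fin_const, Matrix.of_apply]
    ring
  -- det signs
  have hds1 : 0 < (hess3 (fPert ε δ) ![0, 0, u]).det := by
    rw [hdet1]; nlinarith only [mul_pos (mul_pos hδ0 hδ0) (mul_pos (mul_pos hu0 hu0) hu0)]
  have hds2 : (hess3 (fPert ε δ) ![0, 0, -u]).det < 0 := by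
    rw [hdet2]; nlinarith only [mul_pos (mul_pos hδ0 hδ0) (mul_pos (mul_pos hu0 hu0) hu0)]
  have hds3 : (hess3 (fPert ε δ) ![2*δ*w/3, 0, w]).det < 0 := by
    rw [hdet3]; nlinarith only [mul_pos (mul_pos (pow_pos hδ0 2) (pow_pos hw0 3)) hB72]
  have hds4 : 0 < (hess3 (fPert ε δ) ![-(2*δ*w)/3, 0, -w]).det := by
    rw [hdet4]; nlinarith only [mul_pos (mul_pos (pow_pos hδ0 2) (pow_pos hw0 3)) hB72]
  have hds5 : (hess3 (fPert ε δ) ![-(δ*w)/3, b, w]).det < 0 := by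
    rw [hdet5]; nlinarith only [mul_pos (mul_pos (pow_pos hb0 2) hw0) hB216]
  have hds6 : (hess3 (fPert ε δ) ![-(δ*w)/3, -b, w]).det < 0 := by
    rw [hdet6]; nlinarith only [mul_pos (mul_pos (pow_pos hb0 2) hw0) hB216]
  have hds7 : 0 < (hess3 (fPert ε δ) ![δ*w/3, b, -w]).det := by
    rw [hdet7]; nlinarith only [mul_pos (mul_pos (pow_pos hb0 2) hw0) hB216]
  have hds8 : 0 < (hess3 (fPert ε δ) ![δ*w/3, -b, -w]).det := by
    rw [hdet8]; nlinarith only [mul_pos (mul_pos (pow_pos hb0 2) hw0) hB216]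

  -- morse indices
  have hm1 : morseIndex3 (fPert ε δ) ![0, 0, u] = 2 := by
    apply morseIndex_eq_two _ _ (hess_herm ε δ _) hds1
    right; rw [htr1, htq1]; nlinarith only [mul_pos hδ0 (mul_pos hu0 hu0), mul_pos (sub_pos.mpr hδ1) (mul_pos hδ0 (mul_pos hu0 hu0))]
  have hm2 : morseIndex3 (fPert ε δ) ![0, 0, -u] = 1 := by
    apply morseIndex_eq_one _ _ (hess_herm ε δ _) hds2
    right; rw [htr2, htq2]; nlinarith only [mul_pos hδ0 (mul_pos hu0 hu0), mul_pos (sub_pos.mpr hδ1) (mul_pos hδ0 (mul_pos hu0 hu0))]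
  have hm3 : morseIndex3 (fPert ε δ) ![2*δ*w/3, 0, w] = 1 := by
    apply morseIndex_eq_one _ _ (hess_herm ε δ _) hds3
    left; rw [htr3]; nlinarith only [hw0, mul_pos (sub_pos.mpr hδ1) hw0]
  have hm4 : morseIndex3 (fPert ε δ) ![-(2*δ*w)/3, 0, -w] = 2 := by
    apply morseIndex_eq_two _ _ (hess_herm ε δ _) hds4
    left; rw [htr4]; nlinarith only [hw0, mul_pos (sub_pos.mpr hδ1) hw0]
  have hm5 : morseIndex3 (fPert ε δ) ![-(δ*w)/3, b, w] = 1 := by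
    apply morseIndex_eq_one _ _ (hess_herm ε δ _) hds5
    left; rw [htr5]; nlinarith only [hw0, mul_pos (sub_pos.mpr hδ1) hw0]
  have hm6 : morseIndex3 (fPert ε δ) ![-(δ*w)/3, -b, w] = 1 := by
    apply morseIndex_eq_one _ _ (hess_herm ε δ _) hds6
    left; rw [htr6]; nlinarith only [hw0, mul_pos (sub_pos.mpr hδ1) hw0]
  have hm7 : morseIndex3 (fPert ε δ) ![δ*w/3, b, -w] = 2 := by
    apply morseIndex_eq_two _ _ (hess_herm ε δ _) hds7
    left; rw [htr7]; nlinarith only [hw0, mul_pos (sub_pos.mpr hδ1) hw0]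
  have hm8 : morseIndex3 (fPert ε δ) ![δ*w/3, -b, -w] = 2 := by
    apply morseIndex_eq_two _ _ (hess_herm ε δ _) hds8
    left; rw [htr8]; nlinarith only [hw0, mul_pos (sub_pos.mpr hδ1) hw0]

  refine ⟨?_, ?_, ?_, ?_⟩
  · -- ncard = 8
    rw [hset]
    rw [Set.ncard_insert_of_notMem (by simp only [Set.mem_insert_iff, Set.mem_singleton_iff]; push_neg; exact ⟨hne12, hne13, hne14, hne15, hne16, hne17, hne18⟩),
      Set.ncard_insert_of_notMem (by simp only [Set.mem_insert_iff, Set.mem_singleton_iff]; push_neg; exact ⟨hne23, hne24, hne25, hne26, hne27, hne28⟩),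
      Set.ncard_insert_of_notMem (by simp only [Set.mem_insert_iff, Set.mem_singleton_iff]; push_neg; exact ⟨hne34, hne35, hne36, hne37, hne38⟩),
      Set.ncard_insert_of_notMem (by simp only [Set.mem_insert_iff, Set.mem_singleton_iff]; push_neg; exact ⟨hne45, hne46, hne47, hne48⟩),
      Set.ncard_insert_of_notMem (by simp only [Set.mem_insert_iff, Set.mem_singleton_iff]; push_neg; exact ⟨hne56, hne57, hne58⟩),
      Set.ncard_insert_of_notMem (by simp only [Set.mem_insert_iff, Set.mem_singleton_iff]; push_neg; exact ⟨hne67, hne68⟩),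
      Set.ncard_insert_of_notMem (by simp only [Set.mem_singleton_iff]; exact hne78),
      Set.ncard_singleton]
  · -- nondegenerate
    intro p hp
    have hp' : p ∈ ({![0, 0, u], ![0, 0, -u], ![2*δ*w/3, 0, w], ![-(2*δ*w)/3, 0, -w], ![-(δ*w)/3, b, w], ![-(δ*w)/3, -b, w], ![δ*w/3, b, -w], ![δ*w/3, -b, -w]} : Set (Fin 3 → ℝ)) := by rw [← hset]; exact hp
    simp only [Set.mem_insert_iff, Set.mem_singleton_iff] at hp'
    rcases hp' with rfl | rfl | rfl | rfl | rfl | rfl | rfl | rfl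
    · exact ne_of_gt hds1
    · exact ne_of_lt hds2
    · exact ne_of_lt hds3
    · exact ne_of_gt hds4
    · exact ne_of_lt hds5
    · exact ne_of_lt hds6
    · exact ne_of_gt hds7
    · exact ne_of_gt hds8
  · -- index 1 count
    have hcrit : ∀ q, q ∈ ({![0, 0, u], ![0, 0, -u], ![2*δ*w/3, 0, w], ![-(2*δ*w)/3, 0, -w], ![-(δ*w)/3, b, w], ![-(δ*w)/3, -b, w], ![δ*w/3, b, -w], ![δ*w/3, -b, -w]} : Set (Fin 3 → ℝ)) →
        IsCriticalPt3 (fPert ε δ) q := by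
      intro q hq
      have : q ∈ {p : Fin 3 → ℝ | IsCriticalPt3 (fPert ε δ) p} := by
        rw [hset]; exact hq
      exact this
    have h1set : {p : Fin 3 → ℝ | IsCriticalPt3 (fPert ε δ) p ∧
        morseIndex3 (fPert ε δ) p = 1} =
        ({![0, 0, -u], ![2*δ*w/3, 0, w], ![-(δ*w)/3, b, w], ![-(δ*w)/3, -b, w]} : Set (Fin 3 → ℝ)) := by
      ext p
      simp only [Set.mem_setOf_eq, Set.mem_insert_iff, Set.mem_singleton_iff]
      constructor
      · rintro ⟨hc, hi⟩
        have hp' : p ∈ ({![0, 0, u], ![0, 0, -u], ![2*δ*w/3, 0, w], ![-(2*δ*w)/3, 0, -w], ![-(δ*w)/3, b, w], ![-(δ*w)/3, -b, w], ![δ*w/3, b, -w], ![δ*w/3, -b, -w]} : Set (Fin 3 → ℝ)) := by rw [← hset]; exact hc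
        simp only [Set.mem_insert_iff, Set.mem_singleton_iff] at hp'
        rcases hp' with rfl | rfl | rfl | rfl | rfl | rfl | rfl | rfl
        · rw [hm1] at hi; omega
        · tauto
        · tauto
        · rw [hm4] at hi; omega
        · tauto
        · tauto
        · rw [hm7] at hi; omega
        · rw [hm8] at hi; omega
      · rintro (rfl | rfl | rfl | rfl)
        · exact ⟨hcrit _ (by simp only [Set.mem_insert_iff, Set.mem_singleton_iff]; tauto), hm2⟩
        · exact ⟨hcrit _ (by simp only [Set.mem_insert_iff, Set.mem_singleton_iff]; tauto), hm3⟩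
        · exact ⟨hcrit _ (by simp only [Set.mem_insert_iff, Set.mem_singleton_iff]; tauto), hm5⟩
        · exact ⟨hcrit _ (by simp only [Set.mem_insert_iff, Set.mem_singleton_iff]; tauto), hm6⟩
    rw [h1set]
    rw [Set.ncard_insert_of_notMem (by simp only [Set.mem_insert_iff, Set.mem_singleton_iff]; push_neg; exact ⟨hne23, hne25, hne26⟩),
      Set.ncard_insert_of_notMem (by simp only [Set.mem_insert_iff, Set.mem_singleton_iff]; push_neg; exact ⟨hne35, hne36⟩),
      Set.ncard_insert_of_notMem (by simp only [Set.mem_singleton_iff]; exact hne56),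
      Set.ncard_singleton]
  · -- index 2 count
    have hcrit : ∀ q, q ∈ ({![0, 0, u], ![0, 0, -u], ![2*δ*w/3, 0, w], ![-(2*δ*w)/3, 0, -w], ![-(δ*w)/3, b, w], ![-(δ*w)/3, -b, w], ![δ*w/3, b, -w], ![δ*w/3, -b, -w]} : Set (Fin 3 → ℝ)) →
        IsCriticalPt3 (fPert ε δ) q := by
      intro q hq
      have : q ∈ {p : Fin 3 → ℝ | IsCriticalPt3 (fPert ε δ) p} := by
        rw [hset]; exact hq
      exact this
    have h2set : {p : Fin 3 → ℝ | IsCriticalPt3 (fPert ε δ) p ∧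
        morseIndex3 (fPert ε δ) p = 2} =
        ({![0, 0, u], ![-(2*δ*w)/3, 0, -w], ![δ*w/3, b, -w], ![δ*w/3, -b, -w]} : Set (Fin 3 → ℝ)) := by
      ext p
      simp only [Set.mem_setOf_eq, Set.mem_insert_iff, Set.mem_singleton_iff]
      constructor
      · rintro ⟨hc, hi⟩
        have hp' : p ∈ ({![0, 0, u], ![0, 0, -u], ![2*δ*w/3, 0, w], ![-(2*δ*w)/3, 0, -w], ![-(δ*w)/3, b, w], ![-(δ*w)/3, -b, w], ![δ*w/3, b, -w], ![δ*w/3, -b, -w]} : Set (Fin 3 → ℝ)) := by rw [← hset]; exact hc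
        simp only [Set.mem_insert_iff, Set.mem_singleton_iff] at hp'
        rcases hp' with rfl | rfl | rfl | rfl | rfl | rfl | rfl | rfl
        · tauto
        · rw [hm2] at hi; omega
        · rw [hm3] at hi; omega
        · tauto
        · rw [hm5] at hi; omega
        · rw [hm6] at hi; omega
        · tauto
        · tauto
      · rintro (rfl | rfl | rfl | rfl)
        · exact ⟨hcrit _ (by simp only [Set.mem_insert_iff, Set.mem_singleton_iff]; tauto), hm1⟩
        · exact ⟨hcrit _ (by simp only [Set.mem_insert_iff, Set.mem_singleton_iff]; tauto), hm4⟩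
        · exact ⟨hcrit _ (by simp only [Set.mem_insert_iff, Set.mem_singleton_iff]; tauto), hm7⟩
        · exact ⟨hcrit _ (by simp only [Set.mem_insert_iff, Set.mem_singleton_iff]; tauto), hm8⟩
    rw [h2set]
    rw [Set.ncard_insert_of_notMem (by simp only [Set.mem_insert_iff, Set.mem_singleton_iff]; push_neg; exact ⟨hne14, hne17, hne18⟩),
      Set.ncard_insert_of_notMem (by simp only [Set.mem_insert_iff, Set.mem_singleton_iff]; push_neg; exact ⟨hne47, hne48⟩),
      Set.ncard_insert_of_notMem (by simp only [Set.mem_singleton_iff]; exact hne78),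
      Set.ncard_singleton]
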